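/- arXiv:2605.13450 — 2 statements merged into one kernel-verified Lean document; each statement's English description precedes it below -/
import Mathlib

section
/- Validity–Specificity Frontier (Theorem 1, OLS form): Let X, Y, Z₁, …, Z_k be square-integrable real-valued random variables on a probability space, and let Ŷ be the orthogonal projection in L²(μ; ℝ) of Y onto the (finite-dimensional, hence closed) subspace spanned by the constant function 1 and Z₁, …, Z_k (the ordinary-least-squares prediction of Y from the Z_i with intercept). Assume σ(X) > 0, σ(Y) > 0, σ(Ŷ) > 0 and σ(Y − Ŷ) > 0. Set v = corr(X, Y) and R = corr(Y, Ŷ). Then |corr(X, Y − Ŷ)| ≤ |v|·√(1 − R²) + |R|·√(1 − v²). -/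
open MeasureTheory
open scoped RealInnerProductSpace

/-- Covariance of two elements of `L²(μ; ℝ)`: `Cov(X,Y) = E[XY] - E[X]E[Y]`. -/
noncomputable def covL2 {Ω : Type*} [MeasurableSpace Ω] (μ : Measure Ω)
    (X Y : Lp ℝ 2 μ) : ℝ :=
  (∫ ω, X ω * Y ω ∂μ) - (∫ ω, X ω ∂μ) * (∫ ω, Y ω ∂μ)

/-- Standard deviation: `σ(X) = √Cov(X,X)`. -/
noncomputable def sdL2 {Ω : Type*} [MeasurableSpace Ω] (μ : Measure Ω)
    (X : Lp ℝ 2 μ) : ℝ :=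
  Real.sqrt (covL2 μ X X)

/-- Pearson correlation: `corr(X,Y) = Cov(X,Y)/(σ(X)σ(Y))`. -/
noncomputable def corrL2 {Ω : Type*} [MeasurableSpace Ω] (μ : Measure Ω)
    (X Y : Lp ℝ 2 μ) : ℝ :=
  covL2 μ X Y / (sdL2 μ X * sdL2 μ Y)

section Aux

/-- Abstract Hilbert-space form of the frontier inequality. -/
lemma frontier_inner {F : Type*} [NormedAddCommGroup F] [InnerProductSpace ℝ F]
    (x y h e : F) (hy : y = h + e) (hhe : ⟪h, e⟫ = 0)
    (hx : x ≠ 0) (hh : h ≠ 0) (he : e ≠ 0) :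
    |⟪x, e⟫ / (‖x‖ * ‖e‖)| ≤
      |⟪x, y⟫ / (‖x‖ * ‖y‖)| * Real.sqrt (1 - (⟪y, h⟫ / (‖y‖ * ‖h‖)) ^ 2)
        + |⟪y, h⟫ / (‖y‖ * ‖h‖)| * Real.sqrt (1 - (⟪x, y⟫ / (‖x‖ * ‖y‖)) ^ 2) := by
  subst hy
  have hnx : 0 < ‖x‖ := norm_pos_iff.2 hx
  have hnh : 0 < ‖h‖ := norm_pos_iff.2 hh
  have hne : 0 < ‖e‖ := norm_pos_iff.2 he
  have hcomm : ⟪e, h⟫ = 0 := by rw [real_inner_comm h e]; exact hhe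
  have hy2 : ‖h + e‖ ^ 2 = ‖h‖ ^ 2 + ‖e‖ ^ 2 := by
    rw [← real_inner_self_eq_norm_sq, real_inner_add_add_self, hhe,
      real_inner_self_eq_norm_sq, real_inner_self_eq_norm_sq]; ring
  have hny : 0 < ‖h + e‖ := by
    rw [← Real.sqrt_sq (norm_nonneg (h + e)), hy2]; positivity
  have hyh : ⟪h + e, h⟫ = ‖h‖ ^ 2 := by
    rw [inner_add_left, hcomm, real_inner_self_eq_norm_sq]; ring
  have hye : ⟪h + e, e⟫ = ‖e‖ ^ 2 := by
    rw [inner_add_left, hhe, real_inner_self_eq_norm_sq]; ring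
  have hyx : ⟪h + e, x⟫ = ⟪x, h + e⟫ := real_inner_comm x (h + e)
  have hey : ⟪e, h + e⟫ = ‖e‖ ^ 2 := by rw [real_inner_comm (h + e) e]; exact hye
  set c : ℝ := ⟪x, h + e⟫ / ‖h + e‖ ^ 2 with hc
  set r : F := x - c • (h + e) with hr
  have hry : ⟪r, h + e⟫ = 0 := by
    rw [hr, inner_sub_left, real_inner_smul_left, real_inner_self_eq_norm_sq, hc]
    field_simp
    ring
  have hrsq : ‖r‖ ^ 2 = ‖x‖ ^ 2 - ⟪x, h + e⟫ ^ 2 / ‖h + e‖ ^ 2 := by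
    have h1 : ⟪r, r⟫ = ⟪r, x⟫ - c * ⟪r, h + e⟫ := by
      rw [hr, inner_sub_right, real_inner_smul_right]
    have h2 : ⟪r, x⟫ = ‖x‖ ^ 2 - c * ⟪x, h + e⟫ := by
      rw [hr, inner_sub_left, real_inner_smul_left, real_inner_self_eq_norm_sq, hyx]
    rw [← real_inner_self_eq_norm_sq, h1, h2, hry, hc]
    field_simp; ring
  have hxe : ⟪x, e⟫ = c * ‖e‖ ^ 2 + ⟪r, e⟫ := by
    have : ⟪r, e⟫ = ⟪x, e⟫ - c * ⟪h + e, e⟫ := by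
      rw [hr, inner_sub_left, real_inner_smul_left]
    rw [this, hye]; ring
  set e' : F := e - (‖e‖ ^ 2 / ‖h + e‖ ^ 2) • (h + e) with he'
  have hre : ⟪r, e⟫ = ⟪r, e'⟫ := by
    rw [he', inner_sub_right, real_inner_smul_right, hry]; ring
  have hq : (0:ℝ) < ‖h‖ ^ 2 + ‖e‖ ^ 2 := by positivity
  have he'sq : ‖e'‖ ^ 2 = (‖e‖ * ‖h‖ / ‖h + e‖) ^ 2 := by
    rw [← real_inner_self_eq_norm_sq, he', real_inner_sub_sub_self,
      real_inner_smul_right, real_inner_smul_left, real_inner_smul_right,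
      hey, real_inner_self_eq_norm_sq, real_inner_self_eq_norm_sq,
      div_pow, mul_pow, hy2]
    field_simp; ring
  have he'norm : ‖e'‖ = ‖e‖ * ‖h‖ / ‖h + e‖ := by
    rw [← Real.sqrt_sq (norm_nonneg e'), he'sq, Real.sqrt_sq (by positivity)]
  have hbound : |⟪r, e⟫| ≤ ‖r‖ * (‖e‖ * ‖h‖ / ‖h + e‖) := by
    rw [hre, ← he'norm]; exact abs_real_inner_le_norm r e'
  have hR : ⟪h + e, h⟫ / (‖h + e‖ * ‖h‖) = ‖h‖ / ‖h + e‖ := by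
    rw [hyh]; field_simp
  have hsR : Real.sqrt (1 - (⟪h + e, h⟫ / (‖h + e‖ * ‖h‖)) ^ 2) = ‖e‖ / ‖h + e‖ := by
    rw [hR]
    have h3 : 1 - (‖h‖ / ‖h + e‖) ^ 2 = (‖e‖ / ‖h + e‖) ^ 2 := by
      rw [div_pow, div_pow, hy2]; field_simp; ring
    rw [h3, Real.sqrt_sq (by positivity)]
  have hsv : Real.sqrt (1 - (⟪x, h + e⟫ / (‖x‖ * ‖h + e‖)) ^ 2) = ‖r‖ / ‖x‖ := by
    have h3 : 1 - (⟪x, h + e⟫ / (‖x‖ * ‖h + e‖)) ^ 2 = (‖r‖ / ‖x‖) ^ 2 := by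
      rw [div_pow, div_pow, hrsq, mul_pow,
        eq_div_iff (by positivity : (‖x‖:ℝ) ^ 2 ≠ 0)]
      field_simp
    rw [h3, Real.sqrt_sq (by positivity)]
  rw [hsR, hsv, hR, abs_of_pos (by positivity : (0:ℝ) < ‖h‖ / ‖h + e‖)]
  rw [abs_div, abs_of_pos (by positivity : (0:ℝ) < ‖x‖ * ‖e‖),
    abs_div, abs_of_pos (by positivity : (0:ℝ) < ‖x‖ * ‖h + e‖)]
  rw [div_le_iff₀ (by positivity : (0:ℝ) < ‖x‖ * ‖e‖)]
  have key : |⟪x, e⟫| ≤ |⟪x, h + e⟫| * ‖e‖ ^ 2 / ‖h + e‖ ^ 2 + ‖r‖ * (‖e‖ * ‖h‖ / ‖h + e‖) := by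
    calc |⟪x, e⟫| = |c * ‖e‖ ^ 2 + ⟪r, e⟫| := by rw [hxe]
    _ ≤ |c * ‖e‖ ^ 2| + |⟪r, e⟫| := abs_add_le _ _
    _ ≤ |⟪x, h + e⟫| * ‖e‖ ^ 2 / ‖h + e‖ ^ 2 + ‖r‖ * (‖e‖ * ‖h‖ / ‖h + e‖) := by
        have h1 : |c * ‖e‖ ^ 2| = |⟪x, h + e⟫| * ‖e‖ ^ 2 / ‖h + e‖ ^ 2 := by
          rw [abs_mul, hc, abs_div, abs_of_nonneg (by positivity : (0:ℝ) ≤ ‖h + e‖ ^ 2),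
            abs_of_nonneg (by positivity : (0:ℝ) ≤ ‖e‖ ^ 2)]
          ring
        rw [h1]
        exact add_le_add_right hbound _
  have heq : (|⟪x, h + e⟫| / (‖x‖ * ‖h + e‖) * (‖e‖ / ‖h + e‖)
      + ‖h‖ / ‖h + e‖ * (‖r‖ / ‖x‖)) * (‖x‖ * ‖e‖)
      = |⟪x, h + e⟫| * ‖e‖ ^ 2 / ‖h + e‖ ^ 2 + ‖r‖ * (‖e‖ * ‖h‖ / ‖h + e‖) := by
    field_simp
  linarith [key]

variable {Ω : Type*} [MeasurableSpace Ω] (μ : Measure Ω) [IsProbabilityMeasure μ]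

/-- The constant-one element of `L²`. -/
noncomputable def oneL2 : Lp ℝ 2 μ := (memLp_const (1 : ℝ)).toLp fun _ => (1 : ℝ)

omit [IsProbabilityMeasure μ] in
lemma inner_eq_integral (A B : Lp ℝ 2 μ) : ⟪A, B⟫ = ∫ ω, A ω * B ω ∂μ := by
  rw [MeasureTheory.L2.inner_def]
  simp [RCLike.inner_apply]
  exact integral_congr_ae (Filter.Eventually.of_forall fun _ => mul_comm _ _)

lemma inner_one (A : Lp ℝ 2 μ) : ⟪A, oneL2 μ⟫ = ∫ ω, A ω ∂μ := by
  rw [inner_eq_integral]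
  refine integral_congr_ae ?_
  filter_upwards [MemLp.coeFn_toLp (p := 2) (μ := μ) (memLp_const (1:ℝ))] with ω h
  simp [oneL2, h]

lemma one_inner_one : ⟪oneL2 μ, oneL2 μ⟫ = 1 := by
  rw [inner_one]
  have h : (fun ω => (oneL2 μ) ω) =ᵐ[μ] fun _ => (1:ℝ) :=
    MemLp.coeFn_toLp (p := 2) (μ := μ) (memLp_const (1:ℝ))
  rw [integral_congr_ae h]
  simp

/-- The centered version of an `L²` random variable. -/
noncomputable def ctr (A : Lp ℝ 2 μ) : Lp ℝ 2 μ := A - ⟪A, oneL2 μ⟫ • oneL2 μ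

lemma cov_eq_inner_ctr (A B : Lp ℝ 2 μ) : covL2 μ A B = ⟪ctr μ A, ctr μ B⟫ := by
  unfold covL2 ctr
  rw [← inner_eq_integral, ← inner_one μ A, ← inner_one μ B]
  rw [inner_sub_left, inner_sub_right, inner_sub_right, real_inner_smul_left,
    real_inner_smul_right, real_inner_smul_right, real_inner_smul_left, one_inner_one,
    real_inner_comm (oneL2 μ) B]
  ring

lemma sd_eq_norm_ctr (A : Lp ℝ 2 μ) : sdL2 μ A = ‖ctr μ A‖ := by
  rw [sdL2, cov_eq_inner_ctr, real_inner_self_eq_norm_sq, Real.sqrt_sq (norm_nonneg _)]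

end Aux

/-- **Validity–Specificity Frontier (OLS form).** -/
theorem validity_specificity_frontier_ols
    {Ω : Type*} [MeasurableSpace Ω] (μ : Measure Ω) [IsProbabilityMeasure μ]
    (k : ℕ) (Z : Fin k → Lp ℝ 2 μ) (X Y Yhat : Lp ℝ 2 μ)
    (S : Submodule ℝ (Lp ℝ 2 μ))
    (hS : S = Submodule.span ℝ
      (insert ((memLp_const (1 : ℝ)).toLp fun _ => (1 : ℝ)) (Set.range Z)))
    (hmem : Yhat ∈ S)
    (horth : ∀ z ∈ S, ⟪Y - Yhat, z⟫ = 0)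
    (hsX : 0 < sdL2 μ X) (hsY : 0 < sdL2 μ Y) (hsYhat : 0 < sdL2 μ Yhat)
    (hres : 0 < sdL2 μ (Y - Yhat)) :
    |corrL2 μ X (Y - Yhat)| ≤
      |corrL2 μ X Y| * Real.sqrt (1 - (corrL2 μ Y Yhat) ^ 2)
        + |corrL2 μ Y Yhat| * Real.sqrt (1 - (corrL2 μ X Y) ^ 2) := by
  have honeS : oneL2 μ ∈ S := by
    rw [hS]; exact Submodule.subset_span (Set.mem_insert _ _)
  have he1 : ⟪Y - Yhat, oneL2 μ⟫ = 0 := horth _ honeS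
  have heY : ⟪Y - Yhat, Yhat⟫ = 0 := horth _ hmem
  have hctr_e : ctr μ (Y - Yhat) = Y - Yhat := by
    unfold ctr; rw [he1, zero_smul, sub_zero]
  have hYone : ⟪Y, oneL2 μ⟫ = ⟪Yhat, oneL2 μ⟫ := by
    have h := he1; rw [inner_sub_left] at h; linarith
  have hdecomp : ctr μ Y = ctr μ Yhat + (Y - Yhat) := by
    unfold ctr; rw [hYone]; abel
  have horth2 : ⟪ctr μ Yhat, Y - Yhat⟫ = 0 := by
    unfold ctr
    rw [inner_sub_left, real_inner_smul_left, real_inner_comm (Y - Yhat) Yhat,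
      real_inner_comm (Y - Yhat) (oneL2 μ), heY, he1]
    ring
  have hXne : ctr μ X ≠ 0 := by
    rw [sd_eq_norm_ctr] at hsX; exact norm_pos_iff.1 hsX
  have hHne : ctr μ Yhat ≠ 0 := by
    rw [sd_eq_norm_ctr] at hsYhat; exact norm_pos_iff.1 hsYhat
  have hene : Y - Yhat ≠ 0 := by
    rw [sd_eq_norm_ctr, hctr_e] at hres; exact norm_pos_iff.1 hres
  have goal := frontier_inner (ctr μ X) (ctr μ Y) (ctr μ Yhat) (Y - Yhat)
    hdecomp horth2 hXne hHne hene
  simp only [corrL2, cov_eq_inner_ctr, sd_eq_norm_ctr, hctr_e]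
  exact goal
end

section
/- Validity–Specificity Frontier (Theorem 1, orthogonality form): Let X, Y, W be square-integrable real-valued random variables on a probability space with σ(X) > 0, σ(Y) > 0, σ(W) > 0, σ(Y − W) > 0, and satisfying the least-squares orthogonality condition Cov(Y − W, W) = 0. Set v = corr(X, Y) and R = corr(Y, W). Then |corr(X, Y − W)| ≤ |v|·√(1 − R²) + |R|·√(1 − v²). -/
open MeasureTheory

/-- Covariance of two real-valued random variables: `Cov(X,Y) = E[XY] - E[X]E[Y]`. -/
noncomputable def covRV {Ω : Type*} [MeasurableSpace Ω] (μ : Measure Ω) (X Y : Ω → ℝ) : ℝ :=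
  (∫ ω, X ω * Y ω ∂μ) - (∫ ω, X ω ∂μ) * (∫ ω, Y ω ∂μ)

/-- Variance: `Var(X) = Cov(X,X)`. -/
noncomputable def varRV {Ω : Type*} [MeasurableSpace Ω] (μ : Measure Ω) (X : Ω → ℝ) : ℝ :=
  covRV μ X X

/-- Standard deviation: `σ(X) = √Var(X)`. -/
noncomputable def sdRV {Ω : Type*} [MeasurableSpace Ω] (μ : Measure Ω) (X : Ω → ℝ) : ℝ :=
  Real.sqrt (varRV μ X)

/-- Pearson correlation: `corr(X,Y) = Cov(X,Y)/(σ(X)σ(Y))`. -/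
noncomputable def corrRV {Ω : Type*} [MeasurableSpace Ω] (μ : Measure Ω) (X Y : Ω → ℝ) : ℝ :=
  covRV μ X Y / (sdRV μ X * sdRV μ Y)

section Aux

variable {Ω : Type*} [MeasurableSpace Ω] {μ : Measure Ω} [IsProbabilityMeasure μ]

lemma VSF.int_mul {X Y : Ω → ℝ} (hX : MemLp X 2 μ) (hY : MemLp Y 2 μ) :
    Integrable (fun ω => X ω * Y ω) μ := by
  have h : MemLp (X • Y) 1 μ := hY.smul hX (hpqr := ⟨by norm_num [ENNReal.inv_two_add_inv_two]⟩)
  exact h.integrable le_rfl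

lemma VSF.int_self {X : Ω → ℝ} (hX : MemLp X 2 μ) : Integrable X μ :=
  hX.integrable one_le_two

lemma VSF.memLp_comb {X Y : Ω → ℝ} (hX : MemLp X 2 μ) (hY : MemLp Y 2 μ) (s : ℝ) :
    MemLp (fun ω => X ω - s * Y ω) 2 μ :=
  hX.sub (hY.const_mul s)

lemma VSF.cov_comm (X Y : Ω → ℝ) : covRV μ X Y = covRV μ Y X := by
  unfold covRV
  rw [mul_comm (∫ ω, X ω ∂μ)]
  congr 1
  exact integral_congr_ae (.of_forall fun ω => mul_comm _ _)

lemma VSF.cov_bilin {X Y Z W : Ω → ℝ} (hX : MemLp X 2 μ) (hY : MemLp Y 2 μ)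
    (hZ : MemLp Z 2 μ) (hW : MemLp W 2 μ) (s t : ℝ) :
    covRV μ (fun ω => X ω - s * Y ω) (fun ω => Z ω - t * W ω)
      = covRV μ X Z - t * covRV μ X W - s * covRV μ Y Z + s * t * covRV μ Y W := by
  have iXZ := VSF.int_mul hX hZ
  have iXW := VSF.int_mul hX hW
  have iYZ := VSF.int_mul hY hZ
  have iYW := VSF.int_mul hY hW
  unfold covRV
  have h1 : ∫ ω, (X ω - s * Y ω) * (Z ω - t * W ω) ∂μ
      = (∫ ω, X ω * Z ω ∂μ) - t * (∫ ω, X ω * W ω ∂μ) - s * (∫ ω, Y ω * Z ω ∂μ)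
        + s * t * (∫ ω, Y ω * W ω ∂μ) := by
    have e : (fun ω => (X ω - s * Y ω) * (Z ω - t * W ω))
        = fun ω => (X ω * Z ω - t * (X ω * W ω)) - (s * (Y ω * Z ω) - s * t * (Y ω * W ω)) := by
      funext ω; ring
    have iA : Integrable (fun ω => X ω * Z ω - t * (X ω * W ω)) μ := iXZ.sub (iXW.const_mul t)
    have iB : Integrable (fun ω => s * (Y ω * Z ω) - s * t * (Y ω * W ω)) μ :=
      (iYZ.const_mul s).sub (iYW.const_mul (s*t))
    rw [e, integral_sub iA iB, integral_sub iXZ (iXW.const_mul t),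
      integral_sub (iYZ.const_mul s) (iYW.const_mul (s*t)),
      MeasureTheory.integral_const_mul, MeasureTheory.integral_const_mul,
      MeasureTheory.integral_const_mul]
    ring
  have h2 : ∫ ω, (X ω - s * Y ω) ∂μ = (∫ ω, X ω ∂μ) - s * ∫ ω, Y ω ∂μ := by
    rw [integral_sub (VSF.int_self hX) ((VSF.int_self hY).const_mul s),
      MeasureTheory.integral_const_mul]
  have h3 : ∫ ω, (Z ω - t * W ω) ∂μ = (∫ ω, Z ω ∂μ) - t * ∫ ω, W ω ∂μ := by
    rw [integral_sub (VSF.int_self hZ) ((VSF.int_self hW).const_mul t),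
      MeasureTheory.integral_const_mul]
  rw [h1, h2, h3]
  ring

lemma VSF.cov_sub_smul_left {X Y Z : Ω → ℝ} (hX : MemLp X 2 μ) (hY : MemLp Y 2 μ)
    (hZ : MemLp Z 2 μ) (s : ℝ) :
    covRV μ (fun ω => X ω - s * Y ω) Z = covRV μ X Z - s * covRV μ Y Z := by
  have h := VSF.cov_bilin hX hY hZ hZ s 0
  have e : (fun ω => Z ω - (0:ℝ) * Z ω) = Z := by funext ω; ring
  rw [e] at h
  rw [h]; ring

lemma VSF.var_nonneg {X : Ω → ℝ} (hX : MemLp X 2 μ) : 0 ≤ varRV μ X := by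
  set c := ∫ ω, X ω ∂μ with hc
  have h1 : MemLp (fun _ : Ω => (1:ℝ)) 2 μ := memLp_const 1
  have hcov1 : covRV μ X (fun _ : Ω => (1:ℝ)) = 0 := by
    simp [covRV]
  have hcov1' : covRV μ (fun _ : Ω => (1:ℝ)) X = 0 := by
    rw [VSF.cov_comm]; exact hcov1
  have hcov11 : covRV μ (fun _ : Ω => (1:ℝ)) (fun _ : Ω => (1:ℝ)) = 0 := by
    simp [covRV]
  have hb := VSF.cov_bilin hX h1 hX h1 c c
  rw [hcov1, hcov1', hcov11] at hb
  have hvar : varRV μ X = covRV μ (fun ω => X ω - c * 1) (fun ω => X ω - c * 1) := by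
    rw [hb]; unfold varRV; ring
  rw [hvar]
  have hmean : ∫ ω, (X ω - c * 1) ∂μ = 0 := by
    rw [integral_sub (VSF.int_self hX) (integrable_const _)]
    simp [hc]
  unfold covRV
  rw [hmean]
  have : 0 ≤ ∫ ω, (X ω - c * 1) * (X ω - c * 1) ∂μ :=
    integral_nonneg fun ω => mul_self_nonneg _
  linarith

lemma VSF.cov_sq_le {X Y : Ω → ℝ} (hX : MemLp X 2 μ) (hY : MemLp Y 2 μ) :
    (covRV μ X Y) ^ 2 ≤ varRV μ X * varRV μ Y := by
  have key : ∀ t : ℝ, 0 ≤ varRV μ Y * (t * t) + (2 * covRV μ X Y) * t + varRV μ X := by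
    intro t
    have h0 := VSF.var_nonneg (VSF.memLp_comb hX hY (-t))
    have hb := VSF.cov_bilin hX hY hX hY (-t) (-t)
    have hcomm : covRV μ Y X = covRV μ X Y := VSF.cov_comm Y X
    unfold varRV at *
    rw [hb, hcomm] at h0
    nlinarith [h0]
  have hd := discrim_le_zero key
  unfold discrim at hd
  nlinarith [hd]

lemma VSF.frontier_core (sa sb sc sw p r s1 : ℝ)
    (hsa : 0 < sa) (hsb : 0 < sb) (hsc : 0 < sc) (hsw : 0 < sw)
    (hb : sb ^ 2 = sc ^ 2 + sw ^ 2) (hs1 : 0 ≤ s1)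
    (hs1sq : s1 ^ 2 = 1 - p ^ 2 / (sa ^ 2 * sb ^ 2))
    (hCS2 : (r - p * sc ^ 2 / sb ^ 2) ^ 2
      ≤ (sa ^ 2 - p ^ 2 / sb ^ 2) * (sc ^ 2 - (sc ^ 2) ^ 2 / sb ^ 2)) :
    |r / (sa * sc)| ≤ |p / (sa * sb)| * (sc / sb) + sw / sb * s1 := by
  have hE : (sa ^ 2 - p ^ 2 / sb ^ 2) * (sc ^ 2 - (sc ^ 2) ^ 2 / sb ^ 2)
      = (sa * sc * sw * s1 / sb) ^ 2 := by
    have hsw2' : sw ^ 2 = sb ^ 2 - sc ^ 2 := by linarith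
    rw [div_pow, mul_pow, mul_pow, mul_pow, hs1sq, hsw2']
    field_simp
  have h4 : |r - p * sc ^ 2 / sb ^ 2| ≤ sa * sc * sw * s1 / sb := by
    calc |r - p * sc ^ 2 / sb ^ 2| = Real.sqrt ((r - p * sc ^ 2 / sb ^ 2) ^ 2) :=
          (Real.sqrt_sq_eq_abs _).symm
      _ ≤ Real.sqrt ((sa * sc * sw * s1 / sb) ^ 2) := by
          rw [← hE]; exact Real.sqrt_le_sqrt hCS2
      _ = sa * sc * sw * s1 / sb := Real.sqrt_sq (by positivity)
  have h5 : |r| ≤ |p| * sc ^ 2 / sb ^ 2 + sa * sc * sw * s1 / sb := by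
    have habs : |r| ≤ |r - p * sc ^ 2 / sb ^ 2| + |p * sc ^ 2 / sb ^ 2| := by
      calc |r| = |(r - p * sc ^ 2 / sb ^ 2) + p * sc ^ 2 / sb ^ 2| := by ring_nf
        _ ≤ _ := abs_add_le _ _
    have heq : |p * sc ^ 2 / sb ^ 2| = |p| * sc ^ 2 / sb ^ 2 := by
      rw [abs_div, abs_mul, abs_of_pos (by positivity : (0:ℝ) < sc ^ 2),
        abs_of_pos (by positivity : (0:ℝ) < sb ^ 2)]
    linarith [habs, heq, h4]
  rw [abs_div, abs_div, abs_of_pos (mul_pos hsa hsc), abs_of_pos (mul_pos hsa hsb),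
    div_le_iff₀ (mul_pos hsa hsc)]
  have heq2 : |p| * sc ^ 2 / sb ^ 2 + sa * sc * sw * s1 / sb
      = (|p| / (sa * sb) * (sc / sb) + sw / sb * s1) * (sa * sc) := by
    field_simp
  linarith [h5, heq2]

lemma VSF.frontier_sqrt (a b c w p r : ℝ) (ha : 0 < a) (hc : 0 < c) (hw : 0 < w)
    (hb : b = c + w) (hCS1 : p ^ 2 ≤ a * b)
    (hCS2 : (r - p * c / b) ^ 2 ≤ (a - p ^ 2 / b) * (c - c ^ 2 / b)) :
    |r / (Real.sqrt a * Real.sqrt c)| ≤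
      |p / (Real.sqrt a * Real.sqrt b)| * Real.sqrt (1 - (w / (Real.sqrt b * Real.sqrt w)) ^ 2)
        + |w / (Real.sqrt b * Real.sqrt w)| * Real.sqrt (1 - (p / (Real.sqrt a * Real.sqrt b)) ^ 2) := by
  have hbpos : 0 < b := by rw [hb]; positivity
  set sa := Real.sqrt a with hsa
  set sb := Real.sqrt b with hsb
  set sc := Real.sqrt c with hsc
  set sw := Real.sqrt w with hsw
  have hsa0 : 0 < sa := Real.sqrt_pos.mpr ha
  have hsb0 : 0 < sb := Real.sqrt_pos.mpr hbpos
  have hsc0 : 0 < sc := Real.sqrt_pos.mpr hc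
  have hsw0 : 0 < sw := Real.sqrt_pos.mpr hw
  have ha2 : sa ^ 2 = a := Real.sq_sqrt ha.le
  have hb2 : sb ^ 2 = b := Real.sq_sqrt hbpos.le
  have hc2 : sc ^ 2 = c := Real.sq_sqrt hc.le
  have hw2 : sw ^ 2 = w := Real.sq_sqrt hw.le
  set s1 := Real.sqrt (1 - p ^ 2 / (a * b)) with hs1def
  have harg : 0 ≤ 1 - p ^ 2 / (a * b) := by
    rw [sub_nonneg, div_le_one (by positivity)]; exact hCS1
  have hs1 : 0 ≤ s1 := Real.sqrt_nonneg _
  have hs1sq : s1 ^ 2 = 1 - p ^ 2 / (a * b) := Real.sq_sqrt harg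
  have ewfrac : w / (sb * sw) = sw / sb := by
    rw [← hw2]; field_simp
  have e1 : Real.sqrt (1 - (w / (sb * sw)) ^ 2) = sc / sb := by
    rw [ewfrac]
    have : 1 - (sw / sb) ^ 2 = (sc / sb) ^ 2 := by
      field_simp
      linarith [hb2, hc2, hw2, hb]
    rw [this, Real.sqrt_sq (by positivity)]
  have e2 : Real.sqrt (1 - (p / (sa * sb)) ^ 2) = s1 := by
    rw [hs1def]
    congr 1
    rw [div_pow, mul_pow, ha2, hb2]
  have e3 : |w / (sb * sw)| = sw / sb := by
    rw [ewfrac, abs_of_pos (by positivity)]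
  rw [e1, e2, e3]
  apply VSF.frontier_core sa sb sc sw p r s1 hsa0 hsb0 hsc0 hsw0
  · rw [hb2, hc2, hw2]; exact hb
  · exact hs1
  · rw [hs1sq, ha2, hb2]
  · rw [ha2, hb2, hc2]; exact hCS2

end Aux

/-- **Validity–Specificity Frontier (orthogonality form).**
If `Cov(Y - W, W) = 0` (least-squares orthogonality), `v = corr(X,Y)`, `R = corr(Y,W)`,
then `|corr(X, Y - W)| ≤ |v|·√(1 - R²) + |R|·√(1 - v²)`. -/
theorem validity_specificity_frontier
    {Ω : Type*} [MeasurableSpace Ω] (μ : Measure Ω) [IsProbabilityMeasure μ]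
    (X Y W : Ω → ℝ)
    (hX : MemLp X 2 μ) (hY : MemLp Y 2 μ) (hW : MemLp W 2 μ)
    (hsX : 0 < sdRV μ X) (hsY : 0 < sdRV μ Y) (hsW : 0 < sdRV μ W)
    (hsYW : 0 < sdRV μ (Y - W))
    (horth : covRV μ (Y - W) W = 0) :
    |corrRV μ X (Y - W)| ≤
      |corrRV μ X Y| * Real.sqrt (1 - (corrRV μ Y W) ^ 2)
        + |corrRV μ Y W| * Real.sqrt (1 - (corrRV μ X Y) ^ 2) := by
  have hU : MemLp (Y - W) 2 μ := hY.sub hW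
  set a := varRV μ X with hadef
  set b := varRV μ Y with hbdef
  set c := varRV μ (Y - W) with hcdef
  set w := varRV μ W with hwdef
  set p := covRV μ X Y with hpdef
  set r := covRV μ X (Y - W) with hrdef
  have ha : 0 < a := Real.sqrt_pos.mp hsX
  have hbp : 0 < b := Real.sqrt_pos.mp hsY
  have hcp : 0 < c := Real.sqrt_pos.mp hsYW
  have hwp : 0 < w := Real.sqrt_pos.mp hsW
  have hsplit : ∀ Z : Ω → ℝ, MemLp Z 2 μ →
      covRV μ Y Z = covRV μ (Y - W) Z + covRV μ W Z := by
    intro Z hZ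
    have h := VSF.cov_sub_smul_left hU hW hZ (-1)
    have e : (fun ω => (Y - W) ω - (-1 : ℝ) * W ω) = Y := by
      funext ω; simp only [Pi.sub_apply]; ring
    rw [e] at h
    rw [h]; ring
  have hcovYW : covRV μ Y W = w := by
    rw [hsplit W hW, horth, hwdef]
    unfold varRV; ring
  have hcovYU : covRV μ Y (Y - W) = c := by
    rw [hsplit (Y - W) hU, VSF.cov_comm W (Y - W), horth, hcdef]
    unfold varRV; ring
  have hbsum : b = c + w := by
    have : covRV μ Y Y = c + w := by
      rw [hsplit Y hY, VSF.cov_comm (Y - W) Y, hcovYU, VSF.cov_comm W Y, hcovYW]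
    rw [hbdef]; unfold varRV; exact this
  have hCS1 : p ^ 2 ≤ a * b := VSF.cov_sq_le hX hY
  -- residual Cauchy-Schwarz
  have hCS2 : (r - p * c / b) ^ 2 ≤ (a - p ^ 2 / b) * (c - c ^ 2 / b) := by
    have hUmem := VSF.memLp_comb hX hY (p / b)
    have hVmem := VSF.memLp_comb hU hY (c / b)
    have hcs := VSF.cov_sq_le hUmem hVmem
    have hcovXU : covRV μ X (Y - W) = r := rfl
    have hb1 := VSF.cov_bilin hX hY hU hY (p / b) (c / b)
    have hb2 := VSF.cov_bilin hX hY hX hY (p / b) (p / b)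
    have hb3 := VSF.cov_bilin hU hY hU hY (c / b) (c / b)
    rw [hcovXU, ← hpdef, hcovYU, (show covRV μ Y Y = b from rfl)] at hb1
    rw [← hpdef, VSF.cov_comm Y X, ← hpdef, (show covRV μ Y Y = b from rfl),
      (show covRV μ X X = a from rfl)] at hb2
    rw [VSF.cov_comm (Y - W) Y, hcovYU,
      (show covRV μ Y Y = b from rfl), (show covRV μ (Y - W) (Y - W) = c from rfl)] at hb3
    unfold varRV at hcs
    rw [hb1, hb2, hb3] at hcs
    have e1 : r - c / b * p - p / b * c + p / b * (c / b) * b = r - p * c / b := by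
      field_simp; ring
    have e2 : a - p / b * p - p / b * p + p / b * (p / b) * b = a - p ^ 2 / b := by
      field_simp; ring
    have e3 : c - c / b * c - c / b * c + c / b * (c / b) * b = c - c ^ 2 / b := by
      field_simp; ring
    rw [e1, e2, e3] at hcs
    exact hcs
  have hgoal := VSF.frontier_sqrt a b c w p r ha hcp hwp hbsum hCS1 hCS2
  simp only [corrRV, sdRV, ← hadef, ← hbdef, ← hcdef, ← hwdef, ← hpdef, ← hrdef, hcovYW]
  exact hgoal
end
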